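/- arXiv:2605.17103 — 2 statements merged into one kernel-verified Lean document; each statement's English description precedes it below -/
import Mathlib

section
/- Let A be a real N × r_U matrix and B a real N × r_V matrix whose columns are orthonormal, i.e., Aᵀ A = I and Bᵀ B = I, with r_U ≥ 1 and r_V ≥ 1. Then the ℓ²-operator norm of Aᵀ B equals 1 if and only if the column spaces of A and B have nontrivial intersection, i.e., Im A ∩ Im B ≠ {0}. -/
/-!
If `U` has orthonormal columns, then `U Uᴴ` is the orthogonal projection onto `Im U`, so
`‖Uᴴ y‖ = ‖U Uᴴ y‖ ≤ ‖y‖`, with equality exactly when `y ∈ Im U`. Hence `‖Aᵀ B x‖ ≤ ‖B x‖ = ‖x‖`,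
so `‖Aᵀ B‖ ≤ 1`; the norm is attained on the compact unit ball, and it equals `1` exactly when
some unit vector `B x` is left unshortened by `Aᵀ`, i.e. lies in `Im A`.
-/

open Matrix

theorem ContinuousLinearMap.exists_norm_le_one_norm_apply_eq_opNorm {𝕜 E F : Type*}
    [DenselyNormedField 𝕜] [NormedAddCommGroup E] [NormedSpace 𝕜 E] [ProperSpace E]
    [NormedAddCommGroup F] [NormedSpace 𝕜 F] (f : E →L[𝕜] F) :
    ∃ x, ‖x‖ ≤ 1 ∧ ‖f x‖ = ‖f‖ := by
  have hmem : ‖f‖ ∈ (fun x => ‖f x‖) '' Metric.closedBall 0 1 := by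
    rw [← f.sSup_unitClosedBall_eq_norm]
    exact ((isCompact_closedBall 0 1).image (by fun_prop)).sSup_mem
      ((Metric.nonempty_closedBall.mpr zero_le_one).image _)
  obtain ⟨x, hx, hfx⟩ := hmem
  exact ⟨x, mem_closedBall_zero_iff.mp hx, hfx⟩

namespace LinearMap

variable {𝕜 E F G : Type*} [RCLike 𝕜]
  [NormedAddCommGroup E] [InnerProductSpace 𝕜 E] [FiniteDimensional 𝕜 E]
  [NormedAddCommGroup F] [InnerProductSpace 𝕜 F] [FiniteDimensional 𝕜 F]
  [NormedAddCommGroup G] [InnerProductSpace 𝕜 G] [FiniteDimensional 𝕜 G]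
  {U : E →ₗ[𝕜] G}

theorem norm_map_of_adjoint_comp_self_eq_id (hU : adjoint U ∘ₗ U = id) (x : E) :
    ‖U x‖ = ‖x‖ := by
  refine (norm_map_iff_inner_map_map U).mpr (fun x y => ?_) x
  rw [← adjoint_inner_left, ← comp_apply, hU, id_apply]

theorem apply_adjoint_apply_eq_starProjection (hU : adjoint U ∘ₗ U = id) (y : G) :
    U (adjoint U y) = (range U).starProjection y := by
  refine ((range U).eq_starProjection_of_mem_of_inner_eq_zero (mem_range_self U _) ?_).symm
  rintro _ ⟨x, rfl⟩
  rw [← adjoint_inner_left, map_sub, ← comp_apply (adjoint U) U, hU, id_apply, sub_self,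
    inner_zero_left]

theorem norm_adjoint_apply_le (hU : adjoint U ∘ₗ U = id) (y : G) : ‖adjoint U y‖ ≤ ‖y‖ := by
  rw [← norm_map_of_adjoint_comp_self_eq_id hU, apply_adjoint_apply_eq_starProjection hU]
  exact (range U).norm_starProjection_apply_le y

theorem norm_adjoint_apply_eq_iff (hU : adjoint U ∘ₗ U = id) (y : G) :
    ‖adjoint U y‖ = ‖y‖ ↔ y ∈ range U := by
  rw [← norm_map_of_adjoint_comp_self_eq_id hU, apply_adjoint_apply_eq_starProjection hU,
    (range U).mem_iff_norm_starProjection]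

theorem norm_adjoint_comp_eq_one_iff {V : F →ₗ[𝕜] G} (hU : adjoint U ∘ₗ U = id)
    (hV : adjoint V ∘ₗ V = id) :
    ‖toContinuousLinearMap (adjoint U ∘ₗ V)‖ = 1 ↔ range U ⊓ range V ≠ ⊥ := by
  set T := toContinuousLinearMap (adjoint U ∘ₗ V)
  have hT : ‖T‖ ≤ 1 := T.opNorm_le_bound zero_le_one fun x => by
    simpa [T, norm_map_of_adjoint_comp_self_eq_id hV] using norm_adjoint_apply_le hU (V x)
  constructor
  · intro hT1
    have := FiniteDimensional.proper_rclike 𝕜 F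
    obtain ⟨x, hx, hTx⟩ := T.exists_norm_le_one_norm_apply_eq_opNorm
    rw [hT1] at hTx
    have hVx : ‖V x‖ = 1 := le_antisymm ((norm_map_of_adjoint_comp_self_eq_id hV x).trans_le hx)
      (hTx ▸ norm_adjoint_apply_le hU (V x))
    have hVx_mem : V x ∈ range U := (norm_adjoint_apply_eq_iff hU _).mp (hTx.trans hVx.symm)
    refine (Submodule.ne_bot_iff _).mpr ⟨V x, ⟨hVx_mem, mem_range_self V x⟩, fun h0 => ?_⟩
    simp [h0] at hVx
  · intro hUV
    obtain ⟨_, ⟨⟨s, rfl⟩, x, hx⟩, hs⟩ := (Submodule.ne_bot_iff _).mp hUV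
    have hTx : T x = s := by
      simp [T, hx, ← comp_apply (adjoint U) U, hU]
    have hxs : ‖x‖ = ‖s‖ := by
      rw [← norm_map_of_adjoint_comp_self_eq_id hV, hx, norm_map_of_adjoint_comp_self_eq_id hU]
    have hs_pos : 0 < ‖s‖ := norm_pos_iff.mpr fun h0 => hs (by simp [h0])
    refine le_antisymm hT ((le_mul_iff_one_le_left hs_pos).mp ?_)
    simpa [hTx, hxs] using T.le_opNorm x

end LinearMap

theorem Matrix.toEuclideanLin_conjTranspose_mul {𝕜 l m n : Type*} [RCLike 𝕜]
    [Fintype l] [Fintype m] [Fintype n] [DecidableEq l] [DecidableEq m] [DecidableEq n]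
    (A : Matrix l m 𝕜) (B : Matrix l n 𝕜) :
    toEuclideanLin (Aᴴ * B) = LinearMap.adjoint (toEuclideanLin A) ∘ₗ toEuclideanLin B := by
  rw [← toEuclideanLin_conjTranspose_eq_adjoint, toLpLin_mul]

theorem Matrix.adjoint_toEuclideanLin_comp_self {𝕜 l m : Type*} [RCLike 𝕜]
    [Fintype l] [Fintype m] [DecidableEq l] [DecidableEq m] {A : Matrix l m 𝕜} (hA : Aᴴ * A = 1) :
    LinearMap.adjoint (toEuclideanLin A) ∘ₗ toEuclideanLin A = LinearMap.id := by
  rw [← toEuclideanLin_conjTranspose_mul, hA, toLpLin_one]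

theorem opNorm_transpose_mul_eq_one_iff_general
    (N rU rV : ℕ)
    (A : Matrix (Fin N) (Fin rU) ℝ) (B : Matrix (Fin N) (Fin rV) ℝ)
    (hA : Aᵀ * A = 1) (hB : Bᵀ * B = 1) :
    ‖LinearMap.toContinuousLinearMap (Matrix.toEuclideanLin (Aᵀ * B))‖ = 1 ↔
      LinearMap.range (Matrix.toEuclideanLin A) ⊓ LinearMap.range (Matrix.toEuclideanLin B)
        ≠ ⊥ := by
  rw [← conjTranspose_eq_transpose_of_trivial] at hA hB ⊢
  rw [toEuclideanLin_conjTranspose_mul]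
  exact LinearMap.norm_adjoint_comp_eq_one_iff (adjoint_toEuclideanLin_comp_self hA)
    (adjoint_toEuclideanLin_comp_self hB)

/-- **Minimal principal angle zero ↔ nontrivial intersection of column spaces.**
For matrices `A`, `B` with orthonormal columns and at least one column each, the
ℓ²-operator norm of `Aᵀ B` equals `1` iff `Im A ∩ Im B ≠ {0}`. -/
theorem opNorm_transpose_mul_eq_one_iff
    (N rU rV : ℕ) (hrU : 1 ≤ rU) (hrV : 1 ≤ rV)
    (A : Matrix (Fin N) (Fin rU) ℝ) (B : Matrix (Fin N) (Fin rV) ℝ)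
    (hA : Aᵀ * A = 1) (hB : Bᵀ * B = 1) :
    ‖LinearMap.toContinuousLinearMap (Matrix.toEuclideanLin (Aᵀ * B))‖ = 1 ↔
      LinearMap.range (Matrix.toEuclideanLin A) ⊓ LinearMap.range (Matrix.toEuclideanLin B)
        ≠ ⊥ :=
  opNorm_transpose_mul_eq_one_iff_general N rU rV A B hA hB
end

section
/- Let E be a finite-dimensional real inner product space, λ > 0, and 0 < m̲ ≤ m̄. Let M : ℝ → L(E, E) be a differentiable family of self-adjoint linear maps with m̲ ‖x‖² ≤ ⟨M(t) x, x⟩ ≤ m̄ ‖x‖² for all t and x, let A : ℝ → L(E, E), and let e : ℝ → E be differentiable with e'(t) = A(t)(e(t)) for all t. Suppose that for all t ≥ 0 and all x ∈ E: ⟨M'(t) x, x⟩ + 2⟨M(t)(A(t) x), x⟩ ≤ −2λ ⟨M(t) x, x⟩. Then for all t ≥ 0, ‖e(t)‖ ≤ √(m̄/m̲) · e^{−λ t} · ‖e(0)‖. -/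
open RealInnerProductSpace Real Set

/- The Lyapunov function `V t = ⟪M t (e t), e t⟫` satisfies `V' ≤ -2λ V` by the contraction
inequality, so `V t ≤ e^{-2λt} V 0`; the two-sided bound on `M` turns this into
`m̲ ‖e t‖² ≤ m̄ e^{-2λt} ‖e 0‖²`. -/

theorem le_mul_exp_of_hasDerivAt_le_mul {V V' : ℝ → ℝ} {a c : ℝ}
    (hV : ∀ t ≥ a, HasDerivAt V (V' t) t) (hV' : ∀ t > a, V' t ≤ c * V t)
    {t : ℝ} (ht : a ≤ t) : V t ≤ V a * exp (c * (t - a)) := by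
  set g : ℝ → ℝ := fun s => exp (-(c * s)) * V s
  have hg (s : ℝ) (hs : s ≥ a) : HasDerivAt g (exp (-(c * s)) * (V' s - c * V s)) s :=
    (((hasDerivAt_id s).const_mul c).neg.exp.mul (hV s hs)).congr_deriv
      (by simp only [Pi.neg_apply, id_eq]; ring)
  have hanti : AntitoneOn g (Ici a) := by
    refine antitoneOn_of_hasDerivWithinAt_nonpos (convex_Ici a)
      (fun s hs => (hg s hs).continuousAt.continuousWithinAt)
      (fun s hs => (hg s (interior_subset hs)).hasDerivWithinAt) fun s hs => ?_
    rw [interior_Ici] at hs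
    exact mul_nonpos_of_nonneg_of_nonpos (exp_pos _).le (sub_nonpos.2 (hV' s hs))
  have hgt : exp (-(c * t)) * V t ≤ exp (-(c * a)) * V a := hanti self_mem_Ici ht ht
  calc V t = exp (c * t) * (exp (-(c * t)) * V t) := by
        rw [← mul_assoc, ← exp_add, add_neg_cancel, exp_zero, one_mul]
    _ ≤ exp (c * t) * (exp (-(c * a)) * V a) := by gcongr
    _ = V a * exp (c * (t - a)) := by
        rw [mul_sub, exp_sub, exp_neg]
        ring

theorem HasDerivAt.inner_clm_apply_self {E : Type*} [NormedAddCommGroup E]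
    [InnerProductSpace ℝ E] {M : ℝ → E →L[ℝ] E} {M' : E →L[ℝ] E} {e : ℝ → E} {v : E}
    {t : ℝ}
    (hM : HasDerivAt M M' t) (he : HasDerivAt e v t)
    (hsym : ∀ x y, ⟪M t x, y⟫ = ⟪x, M t y⟫) :
    HasDerivAt (fun s => ⟪M s (e s), e s⟫) (⟪M' (e t), e t⟫ + 2 * ⟪M t v, e t⟫) t := by
  refine ((hM.clm_apply he).inner ℝ he).congr_deriv ?_
  rw [inner_add_left, hsym, real_inner_comm (M t v)]
  ring

theorem abs_le_sqrt_mul_of_sq_le_mul_sq {x k b : ℝ} (hb : 0 ≤ b) (h : x ^ 2 ≤ k * b ^ 2) :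
    |x| ≤ √k * b :=
  calc |x| ≤ √(k * b ^ 2) := abs_le_sqrt h
    _ = √k * b := by rw [sqrt_mul' k (sq_nonneg b), sqrt_sq hb]

theorem contraction_exponential_convergence_general
    (E : Type*) [NormedAddCommGroup E] [InnerProductSpace ℝ E]
    (lam ml mu : ℝ) (hml : 0 < ml)
    (M M' : ℝ → E →L[ℝ] E)
    (hMderiv : ∀ t : ℝ, HasDerivAt M (M' t) t)
    (hMsym : ∀ (t : ℝ) (x y : E), ⟪M t x, y⟫ = ⟪x, M t y⟫)
    (hMlower : ∀ (t : ℝ) (x : E), ml * ‖x‖ ^ 2 ≤ ⟪M t x, x⟫)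
    (hMupper : ∀ (t : ℝ) (x : E), ⟪M t x, x⟫ ≤ mu * ‖x‖ ^ 2)
    (A : ℝ → E →L[ℝ] E) (e : ℝ → E)
    (hederiv : ∀ t : ℝ, HasDerivAt e (A t (e t)) t)
    (hcontr : ∀ t ≥ (0 : ℝ), ∀ x : E,
      ⟪M' t x, x⟫ + 2 * ⟪M t (A t x), x⟫ ≤ -2 * lam * ⟪M t x, x⟫) :
    ∀ t ≥ (0 : ℝ),
      ‖e t‖ ≤ Real.sqrt (mu / ml) * Real.exp (-lam * t) * ‖e 0‖ := by
  intro t ht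
  set V : ℝ → ℝ := fun s => ⟪M s (e s), e s⟫
  have hV (s : ℝ) :
      HasDerivAt V (⟪M' s (e s), e s⟫ + 2 * ⟪M s (A s (e s)), e s⟫) s :=
    (hMderiv s).inner_clm_apply_self (hederiv s) (hMsym s)
  have hdecay : V t ≤ V 0 * exp (-2 * lam * t) := by
    simpa only [sub_zero] using
      le_mul_exp_of_hasDerivAt_le_mul (fun s _ => hV s) (fun s hs => hcontr s hs.le (e s)) ht
  have hsq : ‖e t‖ ^ 2 ≤ mu / ml * (exp (-lam * t) * ‖e 0‖) ^ 2 := by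
    rw [div_mul_eq_mul_div, le_div_iff₀ hml]
    calc ‖e t‖ ^ 2 * ml ≤ V t := by linarith [hMlower t (e t)]
      _ ≤ V 0 * exp (-2 * lam * t) := hdecay
      _ ≤ mu * ‖e 0‖ ^ 2 * exp (-2 * lam * t) := by gcongr; exact hMupper 0 (e 0)
      _ = mu * (exp (-lam * t) * ‖e 0‖) ^ 2 := by
          rw [mul_pow, ← exp_nat_mul]
          ring_nf
  simpa only [abs_norm, mul_assoc] using
    abs_le_sqrt_mul_of_sq_le_mul_sq (by positivity) hsq

/-- **Contraction implies exponential convergence (Assumption 2 abstraction).**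
Let `M : ℝ → L(E,E)` be a differentiable family of self-adjoint maps with
`m̲ ‖x‖² ≤ ⟪M t x, x⟫ ≤ m̄ ‖x‖²`, let `e' = A t (e t)`, and suppose the contraction
inequality `⟪M' t x, x⟫ + 2⟪M t (A t x), x⟫ ≤ −2λ ⟪M t x, x⟫` holds for all `t ≥ 0`.
Then `‖e t‖ ≤ √(m̄/m̲) · e^{−λ t} · ‖e 0‖` for all `t ≥ 0`. -/
theorem contraction_exponential_convergence
    (E : Type*) [NormedAddCommGroup E] [InnerProductSpace ℝ E] [FiniteDimensional ℝ E]
    (lam ml mu : ℝ) (hlam : 0 < lam) (hml : 0 < ml) (hmlmu : ml ≤ mu)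
    (M M' : ℝ → E →L[ℝ] E)
    (hMderiv : ∀ t : ℝ, HasDerivAt M (M' t) t)
    (hMsym : ∀ (t : ℝ) (x y : E), ⟪M t x, y⟫ = ⟪x, M t y⟫)
    (hMlower : ∀ (t : ℝ) (x : E), ml * ‖x‖ ^ 2 ≤ ⟪M t x, x⟫)
    (hMupper : ∀ (t : ℝ) (x : E), ⟪M t x, x⟫ ≤ mu * ‖x‖ ^ 2)
    (A : ℝ → E →L[ℝ] E) (e : ℝ → E)
    (hederiv : ∀ t : ℝ, HasDerivAt e (A t (e t)) t)
    (hcontr : ∀ t ≥ (0 : ℝ), ∀ x : E,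
      ⟪M' t x, x⟫ + 2 * ⟪M t (A t x), x⟫ ≤ -2 * lam * ⟪M t x, x⟫) :
    ∀ t ≥ (0 : ℝ),
      ‖e t‖ ≤ Real.sqrt (mu / ml) * Real.exp (-lam * t) * ‖e 0‖ :=
  contraction_exponential_convergence_general E lam ml mu hml M M' hMderiv hMsym hMlower hMupper A e
    hederiv hcontr
end
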